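/- arXiv:2305.15349 — 2 statements merged into one kernel-verified Lean document; each statement's English description precedes it below -/
import Mathlib

section
/- Let ℓ : ℝ^d → ℝ be twice continuously differentiable and L_ℓ-smooth, and use the linear parameterization ϕ(x) = x (with s restricted to positive entries). Then the energy f(λ) = E[ℓ(T_λ(u))] is L_ℓ-smooth on the parameter space Λ with respect to the parameter norm. -/
open MeasureTheory ProbabilityTheory InnerProductSpace RealInnerProductSpace

noncomputable section

abbrev Euc (d : ℕ) := EuclideanSpace ℝ (Fin d)

/-- Indices of the strictly lower-triangular entries of a `d × d` matrix. -/
abbrev LowIdx (d : ℕ) := {p : Fin d × Fin d // p.2 < p.1}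

/-- Index set for the parameters `λ = (m, s, L)` of the full-rank Cholesky family. -/
abbrev ParamIdx (d : ℕ) := (Fin d) ⊕ ((Fin d) ⊕ (LowIdx d))

/-- The parameter space `Λ`, with `‖λ‖² = ‖m‖₂² + ‖s‖₂² + ‖L‖_F²`. -/
abbrev Param (d : ℕ) := EuclideanSpace ℝ (ParamIdx d)

def mOf {d : ℕ} (lam : Param d) (i : Fin d) : ℝ := lam (Sum.inl i)
def sOf {d : ℕ} (lam : Param d) (i : Fin d) : ℝ := lam (Sum.inr (Sum.inl i))
def LOf {d : ℕ} (lam : Param d) (i j : Fin d) : ℝ :=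
  if h : j < i then lam (Sum.inr (Sum.inr ⟨(i, j), h⟩)) else 0

/-- The location-scale reparameterization `T_λ(u) = (diag(ϕ(s)) + L) u + m`. -/
def Tmap {d : ℕ} (ϕ : ℝ → ℝ) (lam : Param d) (u : Fin d → ℝ) : Euc d :=
  WithLp.toLp 2 (fun i => mOf lam i + ϕ (sOf lam i) * u i + ∑ j, LOf lam i j * u j)

/-!
For `ϕ = id` the map `λ ↦ T_λ(u)` is linear, say `A_u`, so `∇f(λ) = E[A_u* ∇ℓ(A_u λ)]` and
`⟪∇f(λ) - ∇f(λ'), v⟫ = E⟪∇ℓ(A_u λ) - ∇ℓ(A_u λ'), A_u v⟫ ≤ L_ℓ E[‖A_u (λ - λ')‖ ‖A_u v‖]`.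
Because the coordinates of `u` have mean `0` and identity covariance, `A_u` is an isometry in
mean square: `E‖A_u v‖² = ‖m‖² + ‖C‖_F² = ‖v‖²`. Cauchy–Schwarz then bounds the right-hand side
by `L_ℓ ‖λ - λ'‖ ‖v‖`, and `v = ∇f(λ) - ∇f(λ')` gives the claim.
-/

theorem nonneg_of_norm_sub_le_mul_norm_sub {E F : Type*} [NormedAddCommGroup E] [Nontrivial E]
    [SeminormedAddCommGroup F] {g : E → F} {K : ℝ} (hg : ∀ x y, ‖g x - g y‖ ≤ K * ‖x - y‖) :
    0 ≤ K := by
  obtain ⟨x, hx⟩ := exists_ne (0 : E)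
  have := (norm_nonneg _).trans (hg x 0)
  rw [sub_zero] at this
  exact nonneg_of_mul_nonneg_left this (norm_pos_iff.mpr hx)

theorem inner_gradient_comp_continuousLinearMap {E F : Type*} [NormedAddCommGroup E]
    [InnerProductSpace ℝ E] [CompleteSpace E] [NormedAddCommGroup F] [InnerProductSpace ℝ F]
    [CompleteSpace F] {ℓ : F → ℝ} (A : E →L[ℝ] F) {x : E}
    (hℓ : DifferentiableAt ℝ ℓ (A x)) (v : E) :
    ⟪gradient (fun y => ℓ (A y)) x, v⟫ = ⟪gradient ℓ (A x), A v⟫ := by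
  rw [inner_gradient_left, inner_gradient_left, fderiv_fun_comp x hℓ A.differentiableAt,
    A.fderiv, ContinuousLinearMap.comp_apply]

theorem inner_gradient_comp_sub_le {E F : Type*} [NormedAddCommGroup E]
    [InnerProductSpace ℝ E] [CompleteSpace E] [NormedAddCommGroup F] [InnerProductSpace ℝ F]
    [CompleteSpace F] {ℓ : F → ℝ} {K : ℝ} (hℓ : Differentiable ℝ ℓ)
    (hsmooth : ∀ z z', ‖gradient ℓ z - gradient ℓ z'‖ ≤ K * ‖z - z'‖) (A : E →L[ℝ] F)
    (x x' v : E) :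
    ⟪gradient (fun y => ℓ (A y)) x - gradient (fun y => ℓ (A y)) x', v⟫
      ≤ K * (‖A (x - x')‖ * ‖A v‖) := by
  rw [inner_sub_left, inner_gradient_comp_continuousLinearMap A (hℓ _),
    inner_gradient_comp_continuousLinearMap A (hℓ _), ← inner_sub_left, ← mul_assoc]
  calc _ ≤ ‖gradient ℓ (A x) - gradient ℓ (A x')‖ * ‖A v‖ := real_inner_le_norm _ _
    _ ≤ K * ‖A (x - x')‖ * ‖A v‖ := by
      rw [map_sub]
      exact mul_le_mul_of_nonneg_right (hsmooth _ _) (norm_nonneg _)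

theorem inner_gradient_sub_gradient_eq_integral {E Ω : Type*} [NormedAddCommGroup E]
    [InnerProductSpace ℝ E] [CompleteSpace E] [MeasurableSpace Ω] {μ : Measure Ω}
    {f : E → ℝ} {G : Ω → E → E} (hint : ∀ x, Integrable (fun ω => G ω x) μ)
    (hf : ∀ x, HasGradientAt f (∫ ω, G ω x ∂μ) x) (x x' v : E) :
    ⟪gradient f x - gradient f x', v⟫ = ∫ ω, ⟪G ω x - G ω x', v⟫ ∂μ := by
  rw [(hf x).gradient, (hf x').gradient, ← integral_sub (hint x) (hint x'), real_inner_comm,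
    ← integral_inner (f := fun ω => G ω x - G ω x') ((hint x).sub (hint x'))]
  simp only [real_inner_comm]

theorem integral_mul_le_sqrt_mul_sqrt {Ω : Type*} [MeasurableSpace Ω] {μ : Measure Ω}
    {f g : Ω → ℝ} (hf₀ : 0 ≤ f) (hg₀ : 0 ≤ g) (hf : MemLp f 2 μ) (hg : MemLp g 2 μ) :
    ∫ ω, f ω * g ω ∂μ ≤ √(∫ ω, f ω ^ 2 ∂μ) * √(∫ ω, g ω ^ 2 ∂μ) := by
  have := integral_mul_le_Lp_mul_Lq_of_nonneg Real.HolderConjugate.two_two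
    (ae_of_all _ hf₀) (ae_of_all _ hg₀) (by simpa using hf) (by simpa using hg)
  simpa [Real.sqrt_eq_rpow] using this

section Isotropic

variable {ι Ω : Type*} [DecidableEq ι] [MeasurableSpace Ω] {μ : Measure Ω}
  [IsProbabilityMeasure μ] {u : Ω → ι → ℝ}

theorem covariance_eq_ite_of_iIndepFun (hindep : iIndepFun (fun i ω => u ω i) μ)
    (hu : ∀ i, MemLp (fun ω => u ω i) 2 μ) (hmean : ∀ i, ∫ ω, u ω i ∂μ = 0)
    (hvar : ∀ i, ∫ ω, u ω i ^ 2 ∂μ = 1) (i j : ι) :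
    cov[fun ω => u ω i, fun ω => u ω j; μ] = if i = j then 1 else 0 := by
  split_ifs with hij
  · subst hij
    rw [covariance_self (hu i).aemeasurable, variance_eq_sub (hu i)]
    simp [hvar, hmean]
  · exact (hindep.indepFun hij).covariance_eq_zero (hu i) (hu j)

variable [Fintype ι]

theorem variance_sum_mul_of_covariance_eq_ite (hu : ∀ i, MemLp (fun ω => u ω i) 2 μ)
    (hcov : ∀ i j, cov[fun ω => u ω i, fun ω => u ω j; μ] = if i = j then 1 else 0) (c : ι → ℝ) :
    Var[fun ω => ∑ i, c i * u ω i; μ] = ∑ i, c i ^ 2 := by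
  rw [variance_fun_sum fun i => (hu i).const_mul (c i)]
  simp [covariance_const_mul_left, covariance_const_mul_right, hcov, sq]

theorem integral_sq_add_sum_mul (hu : ∀ i, MemLp (fun ω => u ω i) 2 μ)
    (hmean : ∀ i, ∫ ω, u ω i ∂μ = 0)
    (hcov : ∀ i j, cov[fun ω => u ω i, fun ω => u ω j; μ] = if i = j then 1 else 0)
    (a : ℝ) (c : ι → ℝ) :
    ∫ ω, (a + ∑ i, c i * u ω i) ^ 2 ∂μ = a ^ 2 + ∑ i, c i ^ 2 := by
  have hS : MemLp (fun ω => ∑ i, c i * u ω i) 2 μ :=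
    memLp_finsetSum _ fun i _ => (hu i).const_mul (c i)
  have hmeanS : ∫ ω, ∑ i, c i * u ω i ∂μ = 0 := by
    rw [integral_finsetSum _ fun i _ => ((hu i).integrable one_le_two).const_mul (c i)]
    simp [integral_const_mul, hmean]
  have hY : MemLp (fun ω => a + ∑ i, c i * u ω i) 2 μ := (memLp_const a).add hS
  calc ∫ ω, (a + ∑ i, c i * u ω i) ^ 2 ∂μ
      = Var[fun ω => a + ∑ i, c i * u ω i; μ] + (∫ ω, (a + ∑ i, c i * u ω i) ∂μ) ^ 2 := by
        rw [variance_eq_sub hY, sub_add_cancel]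
        rfl
    _ = a ^ 2 + ∑ i, c i ^ 2 := by
        rw [variance_const_add hS.aestronglyMeasurable,
          variance_sum_mul_of_covariance_eq_ite hu hcov,
          integral_add (integrable_const a) (hS.integrable one_le_two), hmeanS]
        simp [add_comm]

end Isotropic

section Cholesky

variable {d : ℕ}

theorem LOf_add (a b : Param d) (i j : Fin d) : LOf (a + b) i j = LOf a i j + LOf b i j := by
  unfold LOf; split_ifs <;> simp

theorem LOf_smul (c : ℝ) (a : Param d) (i j : Fin d) : LOf (c • a) i j = c * LOf a i j := by
  unfold LOf; split_ifs <;> simp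

theorem LOf_self (lam : Param d) (i : Fin d) : LOf lam i i = 0 :=
  dif_neg (lt_irrefl i)

def cholFactor (lam : Param d) : Matrix (Fin d) (Fin d) ℝ :=
  Matrix.diagonal (sOf lam) + Matrix.of (LOf lam)

def cholLin (w : Fin d → ℝ) : Param d →L[ℝ] Euc d :=
  LinearMap.toContinuousLinearMap
    { toFun := fun lam => Tmap (fun x => x) lam w
      map_add' := fun a b => by
        ext i
        simp only [Tmap, mOf, sOf, PiLp.toLp_apply, PiLp.add_apply, LOf_add, add_mul,
          Finset.sum_add_distrib]
        ring
      map_smul' := fun c a => by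
        ext i
        simp only [Tmap, mOf, sOf, PiLp.toLp_apply, PiLp.smul_apply, smul_eq_mul, LOf_smul,
          mul_assoc, ← Finset.mul_sum, RingHom.id_apply]
        ring }

theorem Tmap_id_apply (lam : Param d) (w : Fin d → ℝ) (i : Fin d) :
    Tmap (fun x => x) lam w i = mOf lam i + ∑ j, cholFactor lam i j * w j := by
  simp only [Tmap, cholFactor, Matrix.add_apply, Matrix.diagonal_apply, Matrix.of_apply, add_mul,
    ite_mul, zero_mul, Finset.sum_add_distrib, Finset.sum_ite_eq, Finset.mem_univ, ↓reduceIte,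
    PiLp.toLp_apply]
  ring

theorem sum_sq_cholFactor (lam : Param d) (i : Fin d) :
    ∑ j, cholFactor lam i j ^ 2 = sOf lam i ^ 2 + ∑ j, LOf lam i j ^ 2 := by
  simp [cholFactor, Matrix.diagonal_apply, add_sq, ite_pow, ite_mul, Finset.sum_add_distrib,
    LOf_self]

theorem sum_sum_sq_LOf (lam : Param d) :
    ∑ i, ∑ j, LOf lam i j ^ 2 = ∑ p : LowIdx d, lam (Sum.inr (Sum.inr p)) ^ 2 := by
  rw [← Fintype.sum_prod_type',
    ← Fintype.sum_subtype_add_sum_subtype (fun q : Fin d × Fin d => q.2 < q.1)]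
  have hlow (p : LowIdx d) : LOf lam p.1.1 p.1.2 = lam (Sum.inr (Sum.inr p)) := dif_pos p.2
  have hupp (q : {q : Fin d × Fin d // ¬ q.2 < q.1}) : LOf lam q.1.1 q.1.2 = 0 := dif_neg q.2
  simp [hlow, hupp]

theorem norm_sq_param_eq_sum (lam : Param d) :
    ‖lam‖ ^ 2 = ∑ i, (mOf lam i ^ 2 + ∑ j, cholFactor lam i j ^ 2) := by
  simp only [sum_sq_cholFactor, Finset.sum_add_distrib, sum_sum_sq_LOf,
    EuclideanSpace.norm_sq_eq, Fintype.sum_sum_type, mOf, sOf, Real.norm_eq_abs, sq_abs]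

end Cholesky

section SecondMoment

variable {d : ℕ} {Ω : Type*} [MeasurableSpace Ω] {μ : Measure Ω} [IsProbabilityMeasure μ]
  {u : Ω → Fin d → ℝ}

theorem memLp_Tmap_id (hu : ∀ i, MemLp (fun ω => u ω i) 2 μ) (lam : Param d) :
    MemLp (fun ω => Tmap (fun x => x) lam (u ω)) 2 μ := by
  refine memLp_piLp_iff.2 fun i => ?_
  simp only [Tmap_id_apply]
  have hconst : MemLp (fun _ : Ω => mOf lam i) 2 μ := memLp_const _
  exact hconst.add (memLp_finsetSum _ fun j _ => (hu j).const_mul _)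

theorem integral_norm_sq_Tmap_id (hu : ∀ i, MemLp (fun ω => u ω i) 2 μ)
    (hmean : ∀ i, ∫ ω, u ω i ∂μ = 0)
    (hcov : ∀ i j, cov[fun ω => u ω i, fun ω => u ω j; μ] = if i = j then 1 else 0)
    (lam : Param d) :
    ∫ ω, ‖Tmap (fun x => x) lam (u ω)‖ ^ 2 ∂μ = ‖lam‖ ^ 2 := by
  have hcoord (i : Fin d) := ((memLp_Tmap_id hu lam).eval_piLp i).integrable_sq
  rw [norm_sq_param_eq_sum]
  simp only [EuclideanSpace.norm_sq_eq, Real.norm_eq_abs, sq_abs]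
  rw [integral_finsetSum _ fun i _ => hcoord i]
  simp only [Tmap_id_apply, integral_sq_add_sum_mul hu hmean hcov]

theorem integral_norm_mul_norm_Tmap_id_le (hu : ∀ i, MemLp (fun ω => u ω i) 2 μ)
    (hmean : ∀ i, ∫ ω, u ω i ∂μ = 0)
    (hcov : ∀ i j, cov[fun ω => u ω i, fun ω => u ω j; μ] = if i = j then 1 else 0)
    (a b : Param d) :
    ∫ ω, ‖Tmap (fun x => x) a (u ω)‖ * ‖Tmap (fun x => x) b (u ω)‖ ∂μ ≤ ‖a‖ * ‖b‖ := by
  have := integral_mul_le_sqrt_mul_sqrt (fun _ => norm_nonneg _) (fun _ => norm_nonneg _)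
    (memLp_Tmap_id hu a).norm (memLp_Tmap_id hu b).norm
  rwa [integral_norm_sq_Tmap_id hu hmean hcov, integral_norm_sq_Tmap_id hu hmean hcov,
    Real.sqrt_sq (norm_nonneg a), Real.sqrt_sq (norm_nonneg b)] at this

end SecondMoment

theorem energy_smooth_linear_general
    {d : ℕ} {Ω : Type*} [MeasurableSpace Ω] (μP : Measure Ω) [IsProbabilityMeasure μP]
    (u : Ω → Fin d → ℝ)
    (hindep : iIndepFun (fun i ω => u ω i) μP)
    (hmean : ∀ i, ∫ ω, u ω i ∂μP = 0)
    (hvar : ∀ i, ∫ ω, (u ω i) ^ 2 ∂μP = 1)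
    (hintpow : ∀ (i : Fin d), ∀ k ≤ 4, Integrable (fun ω => (u ω i) ^ k) μP)
    (ℓ : Euc d → ℝ) (Lℓ : ℝ)
    (hC2 : ContDiff ℝ 2 ℓ)
    (hsmooth : ∀ z z', ‖gradient ℓ z - gradient ℓ z'‖ ≤ Lℓ * ‖z - z'‖)
    (fE : Param d → ℝ)
    (hgint : ∀ lam : Param d,
      Integrable (fun ω => gradient (fun l => ℓ (Tmap (fun x => x) l (u ω))) lam) μP)
    (hswap : ∀ lam : Param d,
      HasGradientAt fE
        (∫ ω, gradient (fun l => ℓ (Tmap (fun x => x) l (u ω))) lam ∂μP) lam) :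
    ∀ lam lam' : Param d, (∀ i, 0 < sOf lam i) → (∀ i, 0 < sOf lam' i) →
      ‖gradient fE lam - gradient fE lam'‖ ≤ Lℓ * ‖lam - lam'‖ := by
  intro lam lam' _ _
  rcases isEmpty_or_nonempty (Fin d) with hd | hd
  · simp [Subsingleton.elim lam lam']
  have hL : 0 ≤ Lℓ := nonneg_of_norm_sub_le_mul_norm_sub hsmooth
  have hu (i : Fin d) : MemLp (fun ω => u ω i) 2 μP :=
    (memLp_two_iff_integrable_sq (by simpa using (hintpow i 1 (by norm_num)).1)).2
      (hintpow i 2 (by norm_num))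
  have hcov := covariance_eq_ite_of_iIndepFun hindep hu hmean hvar
  set G := fun (ω : Ω) (a : Param d) => gradient (fun l => ℓ (Tmap (fun x => x) l (u ω))) a
  set T := fun (a : Param d) (ω : Ω) => ‖Tmap (fun x => x) a (u ω)‖
  set D := gradient fE lam - gradient fE lam'
  have hD : ‖D‖ ^ 2 ≤ Lℓ * (‖lam - lam'‖ * ‖D‖) := calc
    ‖D‖ ^ 2 = ∫ ω, ⟪G ω lam - G ω lam', D⟫ ∂μP := by
      rw [← real_inner_self_eq_norm_sq]
      exact inner_gradient_sub_gradient_eq_integral hgint hswap lam lam' D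
    _ ≤ ∫ ω, Lℓ * (T (lam - lam') ω * T D ω) ∂μP := by
      refine integral_mono (((hgint lam).sub (hgint lam')).inner_const D)
        ((((memLp_Tmap_id hu _).norm).integrable_mul (memLp_Tmap_id hu _).norm).const_mul Lℓ)
        fun ω => ?_
      exact inner_gradient_comp_sub_le (hC2.differentiable two_ne_zero) hsmooth (cholLin (u ω))
        lam lam' D
    _ = Lℓ * ∫ ω, T (lam - lam') ω * T D ω ∂μP := integral_const_mul _ _
    _ ≤ Lℓ * (‖lam - lam'‖ * ‖D‖) := by
      gcongr
      exact integral_norm_mul_norm_Tmap_id_le hu hmean hcov _ _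
  nlinarith [norm_nonneg D, mul_nonneg hL (norm_nonneg (lam - lam'))]

/-- Let `ℓ` be twice continuously differentiable and `L_ℓ`-smooth,
and use the linear parameterization `ϕ(x) = x` (with `s` restricted to positive
entries).  Then the energy `f(λ) = E[ℓ(T_λ(u))]` is `L_ℓ`-smooth on `Λ` with respect
to the parameter norm: its gradient is `L_ℓ`-Lipschitz on `Λ = {λ | s > 0}`.
(Differentiation under the expectation is encoded by `hswap`.) -/
theorem energy_smooth_linear
    {d : ℕ} {Ω : Type*} [MeasurableSpace Ω] (μP : Measure Ω) [IsProbabilityMeasure μP]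
    (u : Ω → Fin d → ℝ)
    (hmeas : ∀ i, Measurable fun ω => u ω i)
    (hindep : iIndepFun (fun i ω => u ω i) μP)
    (hident : ∀ i j, IdentDistrib (fun ω => u ω i) (fun ω => u ω j) μP μP)
    (hmean : ∀ i, ∫ ω, u ω i ∂μP = 0)
    (hvar : ∀ i, ∫ ω, (u ω i) ^ 2 ∂μP = 1)
    (hmom3 : ∀ i, ∫ ω, (u ω i) ^ 3 ∂μP = 0)
    (kφ : ℝ) (hmom4 : ∀ i, ∫ ω, (u ω i) ^ 4 ∂μP = kφ)
    (hintpow : ∀ (i : Fin d), ∀ k ≤ 4, Integrable (fun ω => (u ω i) ^ k) μP)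
    (ℓ : Euc d → ℝ) (Lℓ : ℝ)
    (hC2 : ContDiff ℝ 2 ℓ)
    (hsmooth : ∀ z z', ‖gradient ℓ z - gradient ℓ z'‖ ≤ Lℓ * ‖z - z'‖)
    (fE : Param d → ℝ)
    (hfE : ∀ lam, fE lam = ∫ ω, ℓ (Tmap (fun x => x) lam (u ω)) ∂μP)
    (hgint : ∀ lam : Param d,
      Integrable (fun ω => gradient (fun l => ℓ (Tmap (fun x => x) l (u ω))) lam) μP)
    (hswap : ∀ lam : Param d,
      HasGradientAt fE
        (∫ ω, gradient (fun l => ℓ (Tmap (fun x => x) l (u ω))) lam ∂μP) lam) :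
    ∀ lam lam' : Param d, (∀ i, 0 < sOf lam i) → (∀ i, 0 < sOf lam' i) →
      ‖gradient fE lam - gradient fE lam'‖ ≤ Lℓ * ‖lam - lam'‖ :=
  energy_smooth_linear_general μP u hindep hmean hvar hintpow ℓ Lℓ hC2 hsmooth fE hgint hswap
end
end

section
/- Let the diagonal conditioner ϕ : ℝ → (0, ∞) be continuously differentiable, and assume the coordinates of u are independent with E[u_i] = 0 and E[u_i²] = 1. Then the infimum over pairs λ ≠ λ' in Λ of E‖T_λ(u) − T_{λ'}(u)‖² / ‖λ − λ'‖² equals 0; in particular there is no constant c > 0 such that E‖T_λ(u) − T_{λ'}(u)‖² ≥ c · ‖λ − λ'‖² for all λ, λ' ∈ Λ, so the quadratic lower bound through which strong convexity of ℓ transfers to the energy necessarily fails for any such nonlinear conditioner. -/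
/-!
Moving only the scale coordinate `sᵢ` from `a` to `b` changes `T_λ(u)` only in coordinate `i`,
by `(ϕ a - ϕ b) uᵢ`, so the energy is `(ϕ a - ϕ b)²` while `‖λ - λ'‖² = (a - b)²`. A bound
`c (a - b)² ≤ (ϕ a - ϕ b)²` would make the continuous `ϕ` injective, hence strictly monotone;
but then on one side of `0` it stays in `(0, ϕ 0)`, so its difference quotients to `0` tend to `0`.
-/

open MeasureTheory ProbabilityTheory

noncomputable section

lemma exists_sq_sub_lt_mul_sq_sub_of_continuous_of_pos {ϕ : ℝ → ℝ} (hc : Continuous ϕ)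
    (hpos : ∀ x, 0 < ϕ x) {ε : ℝ} (hε : 0 < ε) :
    ∃ a b : ℝ, a ≠ b ∧ (ϕ a - ϕ b) ^ 2 < ε * (a - b) ^ 2 := by
  by_cases hinj : Function.Injective ϕ
  · set M := ϕ 0 + ϕ 0 / ε with hMdef
    have hεM : ϕ 0 ^ 2 < ε * M ^ 2 := by
      have : ε * M ^ 2 = ϕ 0 ^ 2 * (ε + 2 + 1 / ε) := by rw [hMdef]; field_simp; ring
      rw [this]
      nlinarith [hpos 0, one_div_pos.mpr hε]
    have hM : ∀ x, x ^ 2 = M ^ 2 → ϕ x < ϕ 0 → (ϕ 0 - ϕ x) ^ 2 < ε * (0 - x) ^ 2 := by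
      intro x hx hlt
      nlinarith [hpos x]
    have hMpos : 0 < M := by have := hpos 0; positivity
    rcases hc.strictMono_of_inj hinj with hmono | hanti
    · exact ⟨0, -M, by linarith, hM (-M) (by ring) (hmono (by linarith))⟩
    · exact ⟨0, M, hMpos.ne, hM M rfl (hanti hMpos)⟩
  · obtain ⟨a, b, hab, hne⟩ := Function.not_injective_iff.mp hinj
    refine ⟨a, b, hne, ?_⟩
    rw [hab, sub_self, zero_pow two_ne_zero]
    have := sub_ne_zero.mpr hne
    positivity

lemma Tmap_single_scale_sub {d : ℕ} (ϕ : ℝ → ℝ) (i : Fin d) (a b : ℝ) (x : Fin d → ℝ) :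
    Tmap ϕ (EuclideanSpace.single (Sum.inr (Sum.inl i)) a) x
        - Tmap ϕ (EuclideanSpace.single (Sum.inr (Sum.inl i)) b) x
      = EuclideanSpace.single i ((ϕ a - ϕ b) * x i) := by
  ext j
  by_cases hj : j = i
  · subst hj; simp [Tmap, mOf, sOf, LOf]; ring
  · simp [Tmap, mOf, sOf, LOf, hj]

lemma integral_norm_Tmap_single_scale_sub_sq {d : ℕ} {Ω : Type*} [MeasurableSpace Ω]
    (μ : Measure Ω) (u : Ω → Fin d → ℝ) {i : Fin d} (hvar : ∫ ω, (u ω i) ^ 2 ∂μ = 1)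
    (ϕ : ℝ → ℝ) (a b : ℝ) :
    ∫ ω, ‖Tmap ϕ (EuclideanSpace.single (Sum.inr (Sum.inl i)) a) (u ω)
        - Tmap ϕ (EuclideanSpace.single (Sum.inr (Sum.inl i)) b) (u ω)‖ ^ 2 ∂μ
      = (ϕ a - ϕ b) ^ 2 := by
  simp_rw [Tmap_single_scale_sub, PiLp.norm_single, Real.norm_eq_abs, sq_abs, mul_pow]
  rw [integral_const_mul, hvar, mul_one]

lemma norm_single_sub_single_sq {ι : Type*} [Fintype ι] [DecidableEq ι] (i : ι) (a b : ℝ) :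
    ‖EuclideanSpace.single i a - EuclideanSpace.single i b‖ ^ 2 = (a - b) ^ 2 := by
  rw [← dist_eq_norm, PiLp.dist_single_same, Real.dist_eq, sq_abs]

theorem no_quadratic_lower_bound_nonlinear_general
    {d : ℕ} (hd : 0 < d)
    {Ω : Type*} [MeasurableSpace Ω] (μ : Measure Ω)
    (u : Ω → Fin d → ℝ)
    (hvar : ∀ i, ∫ ω, (u ω i) ^ 2 ∂μ = 1)
    (ϕ : ℝ → ℝ) (hϕpos : ∀ x, 0 < ϕ x) (hϕC1 : ContDiff ℝ 1 ϕ) :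
    sInf {r : ℝ | ∃ lam lam' : Param d, lam ≠ lam' ∧
        r = (∫ ω, ‖Tmap ϕ lam (u ω) - Tmap ϕ lam' (u ω)‖ ^ 2 ∂μ) / ‖lam - lam'‖ ^ 2}
      = 0 ∧
    ¬ ∃ c : ℝ, 0 < c ∧ ∀ lam lam' : Param d,
        c * ‖lam - lam'‖ ^ 2 ≤ ∫ ω, ‖Tmap ϕ lam (u ω) - Tmap ϕ lam' (u ω)‖ ^ 2 ∂μ := by
  let param (a : ℝ) : Param d := EuclideanSpace.single (Sum.inr (Sum.inl ⟨0, hd⟩)) a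
  have henergy (a b : ℝ) : ∫ ω, ‖Tmap ϕ (param a) (u ω) - Tmap ϕ (param b) (u ω)‖ ^ 2 ∂μ
      = (ϕ a - ϕ b) ^ 2 := integral_norm_Tmap_single_scale_sub_sq μ u (hvar _) ϕ a b
  have hdist (a b : ℝ) : ‖param a - param b‖ ^ 2 = (a - b) ^ 2 := norm_single_sub_single_sq _ a b
  have hsmall (ε : ℝ) (hε : 0 < ε) : ∃ a b : ℝ, a ≠ b ∧ (ϕ a - ϕ b) ^ 2 < ε * (a - b) ^ 2 :=
    exists_sq_sub_lt_mul_sq_sub_of_continuous_of_pos hϕC1.continuous hϕpos hε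
  refine ⟨?_, fun ⟨c, hc, hbound⟩ => ?_⟩
  · set S := {r : ℝ | ∃ lam lam' : Param d, lam ≠ lam' ∧
      r = (∫ ω, ‖Tmap ϕ lam (u ω) - Tmap ϕ lam' (u ω)‖ ^ 2 ∂μ) / ‖lam - lam'‖ ^ 2}
    have hsmall_ratio (w : ℝ) (hw : 0 < w) : ∃ r ∈ S, r < w := by
      obtain ⟨a, b, hab, hlt⟩ := hsmall w hw
      have hab2 : 0 < (a - b) ^ 2 := by have := sub_ne_zero.mpr hab; positivity
      refine ⟨_, ⟨param a, param b, fun h => ?_, rfl⟩, ?_⟩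
      · exact hab2.ne (by simpa [h] using hdist a b)
      · rwa [henergy, hdist, div_lt_iff₀ hab2]
    refine csInf_eq_of_forall_ge_of_forall_gt_exists_lt ?_ ?_ hsmall_ratio
    · obtain ⟨r, hr, -⟩ := hsmall_ratio 1 one_pos
      exact ⟨r, hr⟩
    · rintro r ⟨lam, lam', -, rfl⟩
      exact div_nonneg (integral_nonneg fun ω => by positivity) (by positivity)
  · obtain ⟨a, b, -, hlt⟩ := hsmall c hc
    have := hbound (param a) (param b)
    rw [henergy, hdist] at this
    linarith

/-- For a continuously differentiable diagonal conditioner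
`ϕ : ℝ → (0,∞)` and `u` with independent, centered, unit-variance coordinates, the
infimum over pairs `λ ≠ λ'` of `E‖T_λ(u) − T_{λ'}(u)‖² / ‖λ − λ'‖²` equals `0`;
in particular there is no constant `c > 0` with
`E‖T_λ(u) − T_{λ'}(u)‖² ≥ c‖λ − λ'‖²` for all `λ, λ'`, so the quadratic lower bound
through which strong convexity transfers to the energy fails. -/
theorem no_quadratic_lower_bound_nonlinear
    {d : ℕ} (hd : 0 < d)
    {Ω : Type*} [MeasurableSpace Ω] (μ : Measure Ω) [IsProbabilityMeasure μ]
    (u : Ω → Fin d → ℝ)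
    (hmeas : ∀ i, Measurable fun ω => u ω i)
    (hindep : iIndepFun (fun i ω => u ω i) μ)
    (hmean : ∀ i, ∫ ω, u ω i ∂μ = 0)
    (hvar : ∀ i, ∫ ω, (u ω i) ^ 2 ∂μ = 1)
    (hint1 : ∀ i, Integrable (fun ω => u ω i) μ)
    (hint2 : ∀ i j, Integrable (fun ω => u ω i * u ω j) μ)
    (ϕ : ℝ → ℝ) (hϕpos : ∀ x, 0 < ϕ x) (hϕC1 : ContDiff ℝ 1 ϕ) :
    sInf {r : ℝ | ∃ lam lam' : Param d, lam ≠ lam' ∧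
        r = (∫ ω, ‖Tmap ϕ lam (u ω) - Tmap ϕ lam' (u ω)‖ ^ 2 ∂μ) / ‖lam - lam'‖ ^ 2}
      = 0 ∧
    ¬ ∃ c : ℝ, 0 < c ∧ ∀ lam lam' : Param d,
        c * ‖lam - lam'‖ ^ 2 ≤ ∫ ω, ‖Tmap ϕ lam (u ω) - Tmap ϕ lam' (u ω)‖ ^ 2 ∂μ :=
  no_quadratic_lower_bound_nonlinear_general hd μ u hvar ϕ hϕpos hϕC1

end
end
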